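/- Let n ≥ 1 and let M be an n×n complex matrix. The following are equivalent: (1) M is a symmetric Hadamard matrix in dephased form and there exist permutations σ, ρ of ℤ/nℤ with M = P_σᵀ · F_n · P_ρ; (2) there exist a permutation τ of ℤ/nℤ with τ(0) = 0 and a unit m of ℤ/nℤ such that M = P_τᵀ · F_n · P_{(·m)} · P_τ. -/

import Mathlib

open Matrix Complex

/-- The `n × n` Fourier matrix, with entries `F[j,k] = exp(2πi·jk/n)/√n`. -/
noncomputable def Fourier (n : ℕ) : Matrix (ZMod n) (ZMod n) ℂ :=
  Matrix.of fun j k =>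
    ((1 / Real.sqrt n : ℝ) : ℂ) *
      Complex.exp (2 * Real.pi * Complex.I * ((j.val : ℂ) * (k.val : ℂ)) / (n : ℂ))

/-- The permutation matrix of a map `σ`: `P[j,k] = 1` if `j = σ k`, else `0`. -/
def permMat {n : ℕ} (σ : ZMod n → ZMod n) : Matrix (ZMod n) (ZMod n) ℂ :=
  Matrix.of fun j k => if j = σ k then 1 else 0

/-- An `n × n` complex Hadamard matrix: unitary with all entries of absolute value `1/√n`. -/
def IsHadamard (n : ℕ) (H : Matrix (ZMod n) (ZMod n) ℂ) [NeZero n] : Prop :=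
  H * Hᴴ = 1 ∧ Hᴴ * H = 1 ∧ ∀ i j, ‖H i j‖ = 1 / Real.sqrt n

/-- Dephased form: all entries of the 0th row and 0th column equal `1/√n`. -/
def IsDephased (n : ℕ) (H : Matrix (ZMod n) (ZMod n) ℂ) : Prop :=
  (∀ j, H 0 j = ((1 / Real.sqrt n : ℝ) : ℂ)) ∧ (∀ i, H i 0 = ((1 / Real.sqrt n : ℝ) : ℂ))

/-!
Write `Fourier n j k = c · ψ(j k)` with `c = 1/√n` and `ψ` the standard additive character of
`ℤ/nℤ`. Since `ψ` is injective, the entries of `P_σᵀ F P_ρ = (F (σ j) (ρ k))` determine the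
products `σ j · ρ k`. Symmetry says `σ j · ρ k = σ k · ρ j`; evaluating at `k = ρ⁻¹ 1` gives
`σ = a · ρ` with `a = σ (ρ⁻¹ 1)`, a unit because `σ` hits `1`, and the dephased first column
gives `ρ 0 = 0`, so `τ = ρ`, `m = a` work. Conversely `P_τᵀ F P_{(·m)} P_τ` is a row and column
permutation of the unitary `F`, it is symmetric because `τ j · m · τ k` is, and dephased
because `τ 0 = 0`.
-/

section PermMat

variable {n : ℕ} [NeZero n]

lemma permMat_transpose_mul (A : Matrix (ZMod n) (ZMod n) ℂ) (f : ZMod n → ZMod n) :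
    (permMat f)ᵀ * A = A.submatrix f id := by
  ext j k
  simp [mul_apply, permMat]

lemma mul_permMat (A : Matrix (ZMod n) (ZMod n) ℂ) (f : ZMod n → ZMod n) :
    A * permMat f = A.submatrix id f := by
  ext j k
  simp [mul_apply, permMat]

end PermMat

section FourierMatrix

variable {n : ℕ} [NeZero n]

lemma Fourier_apply (j k : ZMod n) :
    Fourier n j k = ((1 / √n : ℝ) : ℂ) * ZMod.stdAddChar (j * k) := by
  have hval : ((j.val * k.val : ℕ) : ZMod n) = j * k := by
    push_cast
    rw [ZMod.natCast_zmod_val, ZMod.natCast_zmod_val]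
  rw [Fourier, of_apply, ← hval, ZMod.stdAddChar_apply, ZMod.toCircle_natCast]
  push_cast
  ring_nf

lemma Fourier_apply_eq_Fourier_apply_iff {a b c d : ZMod n} :
    Fourier n a b = Fourier n c d ↔ a * b = c * d := by
  have hn : (0 : ℝ) < n := by exact_mod_cast Nat.pos_of_neZero n
  have hc : ((1 / √n : ℝ) : ℂ) ≠ 0 := by exact_mod_cast (by positivity : (0 : ℝ) < 1 / √n).ne'
  rw [Fourier_apply, Fourier_apply, mul_right_inj' hc, ZMod.injective_stdAddChar.eq_iff]

lemma Fourier_zero_left (k : ZMod n) : Fourier n 0 k = ((1 / √n : ℝ) : ℂ) := by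
  simp [Fourier_apply]

lemma Fourier_zero_right (j : ZMod n) : Fourier n j 0 = ((1 / √n : ℝ) : ℂ) := by
  simp [Fourier_apply]

lemma Fourier_mul_conjTranspose : Fourier n * (Fourier n)ᴴ = 1 := by
  set c : ℂ := ((1 / √n : ℝ) : ℂ)
  have hc : c * starRingEnd ℂ c * n = 1 := by
    have : (0 : ℝ) < n := by exact_mod_cast Nat.pos_of_neZero n
    rw [Complex.conj_ofReal, ← ofReal_natCast, ← ofReal_mul, ← ofReal_mul, ofReal_eq_one]
    field_simp
    exact (Real.sq_sqrt this.le).symm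
  ext j k
  calc (Fourier n * (Fourier n)ᴴ) j k
      = c * starRingEnd ℂ c * ∑ l, ZMod.stdAddChar (l * (j - k)) := by
        simp only [mul_apply, conjTranspose_apply, Fourier_apply, Finset.mul_sum, star_mul',
          RCLike.star_def]
        refine Finset.sum_congr rfl fun l _ => ?_
        rw [← AddChar.map_neg_eq_conj, mul_mul_mul_comm, ← AddChar.map_add_eq_mul,
          show j * l + -(k * l) = l * (j - k) by ring]
    _ = (1 : Matrix (ZMod n) (ZMod n) ℂ) j k := by
        rw [AddChar.sum_mulShift _ (ZMod.isPrimitive_stdAddChar n), one_apply]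
        split_ifs with h₁ h₂ h₂
        · simpa [ZMod.card] using hc
        · exact absurd (sub_eq_zero.1 h₁) h₂
        · exact absurd (sub_eq_zero.2 h₂) h₁
        · rw [Nat.cast_zero, mul_zero]

lemma isHadamard_Fourier : IsHadamard n (Fourier n) := by
  refine ⟨Fourier_mul_conjTranspose, mul_eq_one_comm.1 Fourier_mul_conjTranspose,
    fun j k => ?_⟩
  rw [Fourier_apply, norm_mul, AddChar.norm_apply, mul_one, Complex.norm_real, Real.norm_eq_abs,
    abs_of_nonneg (by positivity)]

end FourierMatrix

lemma IsHadamard.submatrix {n : ℕ} [NeZero n] {H : Matrix (ZMod n) (ZMod n) ℂ}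
    (hH : IsHadamard n H) (σ ρ : Equiv.Perm (ZMod n)) : IsHadamard n (H.submatrix σ ρ) := by
  obtain ⟨h₁, h₂, hnorm⟩ := hH
  refine ⟨?_, ?_, fun j k => hnorm _ _⟩
  · rw [conjTranspose_submatrix, submatrix_mul_equiv, h₁, submatrix_one_equiv]
  · rw [conjTranspose_submatrix, submatrix_mul_equiv, h₂, submatrix_one_equiv]

lemma exists_unit_forall_eq_mul_of_mul_comm {α R : Type*} [CommMonoid R] (σ ρ : α ≃ R)
    (h : ∀ j k, σ j * ρ k = σ k * ρ j) : ∃ a : Rˣ, ∀ j, σ j = a * ρ j := by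
  have hσ : ∀ j, σ j = σ (ρ.symm 1) * ρ j := fun j => by
    simpa using h j (ρ.symm 1)
  have ha : IsUnit (σ (ρ.symm 1)) :=
    IsUnit.of_mul_eq_one (ρ (σ.symm 1)) (by rw [← hσ, Equiv.apply_symm_apply])
  exact ⟨ha.unit, hσ⟩

theorem symmetric_perm_fourier_characterization
    (n : ℕ) [NeZero n] (M : Matrix (ZMod n) (ZMod n) ℂ) :
    (IsHadamard n M ∧ IsDephased n M ∧ M = Mᵀ ∧
      ∃ σ ρ : Equiv.Perm (ZMod n), M = (permMat σ)ᵀ * Fourier n * permMat ρ) ↔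
    (∃ τ : Equiv.Perm (ZMod n), τ 0 = 0 ∧ ∃ m : (ZMod n)ˣ,
      M = (permMat τ)ᵀ * Fourier n * (permMat fun k => (m : ZMod n) * k) * permMat τ) := by
  simp only [permMat_transpose_mul, mul_permMat, submatrix_submatrix, Function.comp_id,
    Function.id_comp]
  constructor
  · rintro ⟨-, ⟨-, hcol⟩, hsym, σ, ρ, rfl⟩
    obtain ⟨a, hσ⟩ := exists_unit_forall_eq_mul_of_mul_comm σ ρ fun j k =>
      Fourier_apply_eq_Fourier_apply_iff.1 (congrFun₂ hsym j k)
    have hρ0 : ρ 0 = 0 := by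
      simpa using Fourier_apply_eq_Fourier_apply_iff.1
        ((hcol (σ.symm 1)).trans (Fourier_zero_left 0).symm)
    refine ⟨ρ, hρ0, a, ?_⟩
    ext j k
    simp only [submatrix_apply, Function.comp_apply, hσ, Fourier_apply_eq_Fourier_apply_iff]
    ring
  · rintro ⟨τ, hτ0, m, rfl⟩
    refine ⟨isHadamard_Fourier.submatrix τ (τ.trans m.mulLeft), ⟨fun k => ?_, fun j => ?_⟩, ?_,
      τ, τ.trans m.mulLeft, rfl⟩
    · simp [hτ0, Fourier_zero_left]
    · simp [hτ0, Fourier_zero_right]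
    · ext j k
      simp only [transpose_apply, submatrix_apply, Function.comp_apply,
        Fourier_apply_eq_Fourier_apply_iff]
      ring
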